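/- arXiv:2312.04351 — 3 statements merged into one kernel-verified Lean document; each statement's English description precedes it below -/
import Mathlib

section
/- Let v₁ > v₂ > v₃ ≥ 0 and suppose positive reals Y'₁, …, Y'_θ (summing to 1, with Y'_{θ-1} > Y'_θ the two smallest) satisfy the risky-bidding condition (v₁ − v₂)/(v₂ − v₃) < (Y'_{θ-1} − Y'_θ)/(1 − Y'_{θ-1} − Y'_θ). Then the risky-bidding revenue satisfies (1 − Y'_{θ-1} − Y'_θ)·v₁ + (Y'_{θ-1} + Y'_θ)·v₃ < ((Y'_{θ-1}+Y'_θ)(1 − 2Y'_θ)·v₂ − 2Y'_θ(1 − Y'_{θ-1} − Y'_θ)·v₁)/(Y'_{θ-1} − Y'_θ). -/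
theorem Finset.add_lt_sum_of_pos {ι : Type*} [DecidableEq ι] {s : Finset ι} {f : ι → ℝ}
    (hf : ∀ i ∈ s, 0 < f i) {i j k : ι} (hi : i ∈ s) (hj : j ∈ s) (hk : k ∈ s)
    (hij : i ≠ j) (hki : k ≠ i) (hkj : k ≠ j) :
    f i + f j < ∑ l ∈ s, f l := by
  rw [← Finset.sum_pair hij]
  refine Finset.sum_lt_sum_of_subset (by simp [Finset.insert_subset_iff, hi, hj]) hk
    (by simp [hki, hkj]) (hf k hk) fun l hl _ => (hf l hl).le

/-- Multiplying out, the bound is `R < S v₁ + (a + b) (v₂ - S (v₁ - v₂) / (a - b))` with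
`S = 1 - a - b`, and the risky condition says exactly `v₃ < v₂ - S (v₁ - v₂) / (a - b)`. -/
theorem risky_revenue_lt {a b v₁ v₂ v₃ : ℝ} (hS : 0 < 1 - a - b) (hba : b < a)
    (hab : 0 < a + b) (h32 : v₃ < v₂)
    (hrisky : (v₁ - v₂) / (v₂ - v₃) < (a - b) / (1 - a - b)) :
    (1 - a - b) * v₁ + (a + b) * v₃ <
      ((a + b) * (1 - 2 * b) * v₂ - 2 * b * (1 - a - b) * v₁) / (a - b) := by
  have hcross : (v₁ - v₂) * (1 - a - b) < (a - b) * (v₂ - v₃) :=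
    (div_lt_div_iff₀ (sub_pos.mpr h32) hS).mp hrisky
  rw [lt_div_iff₀ (sub_pos.mpr hba)]
  nlinarith [mul_lt_mul_of_pos_left hcross hab]

theorem stmt4_general (θ : ℕ) (hθ : 3 ≤ θ) (v₁ v₂ v₃ : ℝ)
    (h32 : v₃ < v₂)
    (Y : ℕ → ℝ)
    (hpos : ∀ i ∈ Finset.Icc 1 θ, 0 < Y i)
    (hsum : ∑ i ∈ Finset.Icc 1 θ, Y i = 1)
    (horder : Y θ < Y (θ - 1))
    (hrisky : (v₁ - v₂) / (v₂ - v₃) <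
      (Y (θ - 1) - Y θ) / (1 - Y (θ - 1) - Y θ)) :
    (1 - Y (θ - 1) - Y θ) * v₁ + (Y (θ - 1) + Y θ) * v₃ <
      ((Y (θ - 1) + Y θ) * (1 - 2 * Y θ) * v₂
        - 2 * Y θ * (1 - Y (θ - 1) - Y θ) * v₁) / (Y (θ - 1) - Y θ) := by
  have hmem : ∀ i, 1 ≤ i → i ≤ θ → i ∈ Finset.Icc 1 θ := fun i h1 h2 => Finset.mem_Icc.mpr ⟨h1, h2⟩
  have hlast : Y (θ - 1) + Y θ < 1 := hsum ▸
    Finset.add_lt_sum_of_pos hpos (hmem (θ - 1) (by omega) (by omega)) (hmem θ (by omega) le_rfl)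
      (hmem 1 le_rfl (by omega)) (by omega) (by omega) (by omega)
  have hYθ : 0 < Y θ := hpos θ (hmem θ (by omega) le_rfl)
  exact risky_revenue_lt (by linarith) horder (by linarith) h32 hrisky

/-- Lemma 1, supremum lemma: under the risky-bidding condition,
the risky revenue is bounded above by the stated expression. -/
theorem stmt4 (θ : ℕ) (hθ : 3 ≤ θ) (v₁ v₂ v₃ : ℝ)
    (h3 : 0 ≤ v₃) (h32 : v₃ < v₂) (h21 : v₂ < v₁)
    (Y : ℕ → ℝ)
    (hpos : ∀ i ∈ Finset.Icc 1 θ, 0 < Y i)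
    (hsum : ∑ i ∈ Finset.Icc 1 θ, Y i = 1)
    (hsmall : ∀ i, 1 ≤ i → i ≤ θ - 2 → Y (θ - 1) < Y i ∧ Y θ < Y i)
    (horder : Y θ < Y (θ - 1))
    (hrisky : (v₁ - v₂) / (v₂ - v₃) <
      (Y (θ - 1) - Y θ) / (1 - Y (θ - 1) - Y θ)) :
    (1 - Y (θ - 1) - Y θ) * v₁ + (Y (θ - 1) + Y θ) * v₃ <
      ((Y (θ - 1) + Y θ) * (1 - 2 * Y θ) * v₂
        - 2 * Y θ * (1 - Y (θ - 1) - Y θ) * v₁) / (Y (θ - 1) - Y θ) :=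
  stmt4_general θ hθ v₁ v₂ v₃ h32 Y hpos hsum horder hrisky
end

section
/- Let v₁ > v₂ > v₃ ≥ 0 with (v₁−v₂)/(v₂−v₃) < 1/(θ−2) for some integer θ ≥ 3. Suppose Y₁,…,Y_θ are positive reals summing to 1 (with Y_{θ-1}, Y_θ the two smallest) satisfying (v₁−v₂)/(v₂−v₃) > (Y_{θ-1}+Y_θ)/(1−Y_{θ-1}−Y_θ). Then there exist positive reals Y'₁,…,Y'_θ summing to 1, with Y'_{θ-1} > Y'_θ the two smallest, satisfying (v₁−v₂)/(v₂−v₃) < (Y'_{θ-1}−Y'_θ)/(1−Y'_{θ-1}−Y'_θ), and such that (1−Y'_{θ-1}−Y'_θ)v₁ + (Y'_{θ-1}+Y'_θ)v₃ > (1−Y_{θ-1}−Y_θ)v₂ + (Y_{θ-1}+Y_θ)v₃. -/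
/-!
Write `r = (v₁ - v₂)/(v₂ - v₃)` and `q = (v₁ - v₂)/(v₁ - v₃)`. A setting with tail masses
`b > c` at positions `θ - 1, θ` and the remaining mass spread evenly is a risky equilibrium as soon
as `b - c > r (1 - b - c)`; such a split of the tail mass `T = b + c` exists exactly when `T > q`.
Its revenue `(1 - T) v₁ + T v₃` beats the truthful revenue of `Y`, of tail mass `S > 0`, when
`T < S + (1 - S) q`, and the tail entries stay the smallest when `T < 1/(θ - 1)`. The gap condition
`r < 1/(θ - 2)` is precisely `q < 1/(θ - 1)`, so all three constraints on `T` are compatible.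
-/

open Finset

section Ratios

variable {v₁ v₂ v₃ : ℝ}

lemma div_sub_lt_one_div_add_one (h32 : v₃ < v₂) (h21 : v₂ < v₁) {n : ℝ} (hn : 0 < n)
    (h : (v₁ - v₂) / (v₂ - v₃) < 1 / n) : (v₁ - v₂) / (v₁ - v₃) < 1 / (n + 1) := by
  rw [div_lt_div_iff₀ (by linarith) hn] at h
  rw [div_lt_div_iff₀ (by linarith) (by linarith)]
  linarith

lemma div_sub_mul_one_sub_lt (h32 : v₃ < v₂) (h21 : v₂ < v₁) {T : ℝ}
    (hT : (v₁ - v₂) / (v₁ - v₃) < T) : (v₁ - v₂) / (v₂ - v₃) * (1 - T) < T := by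
  rw [div_lt_iff₀ (by linarith)] at hT
  rw [div_mul_eq_mul_div, div_lt_iff₀ (by linarith)]
  linarith

lemma revenue_lt_of_sub_lt (h31 : v₃ < v₁) {S T : ℝ}
    (hT : T - S < (1 - S) * ((v₁ - v₂) / (v₁ - v₃))) :
    (1 - S) * v₂ + S * v₃ < (1 - T) * v₁ + T * v₃ := by
  rw [← mul_div_assoc, lt_div_iff₀ (by linarith)] at hT
  linarith

end Ratios

lemma exists_tail_mass {q S m : ℝ} (hq1 : q < 1) (hS : 0 < S) (hqm : q < m) :
    ∃ T, q < T ∧ T < S + (1 - S) * q ∧ T < m := by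
  obtain ⟨T, hqT, hT⟩ := exists_between (lt_min (show q < S + (1 - S) * q by nlinarith) hqm)
  exact ⟨T, hqT, hT.trans_le (min_le_left _ _), hT.trans_le (min_le_right _ _)⟩

lemma exists_split_of_mul_one_sub_lt {r T : ℝ} (hr : 0 ≤ r) (hT1 : T ≤ 1)
    (hrT : r * (1 - T) < T) :
    ∃ b c : ℝ, 0 < c ∧ c < b ∧ b + c = T ∧ r * (1 - T) < b - c := by
  have hrT0 : 0 ≤ r * (1 - T) := mul_nonneg hr (by linarith)
  refine ⟨T - (T - r * (1 - T)) / 3, (T - r * (1 - T)) / 3, ?_, ?_, ?_, ?_⟩ <;> linarith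

lemma cast_sub_two_pos {θ : ℕ} (hθ : 3 ≤ θ) : (0 : ℝ) < θ - 2 := by
  have : (3 : ℝ) ≤ θ := by exact_mod_cast hθ
  linarith

noncomputable def tailSetting (θ : ℕ) (b c : ℝ) (i : ℕ) : ℝ :=
  if i = θ - 1 then b else if i = θ then c else (1 - b - c) / ((θ : ℝ) - 2)

namespace tailSetting

variable {θ : ℕ} {b c : ℝ}

@[simp]
lemma apply_sub_one : tailSetting θ b c (θ - 1) = b := if_pos rfl

@[simp]
lemma apply_self (hθ : 1 ≤ θ) : tailSetting θ b c θ = c := by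
  simp [tailSetting, show θ ≠ θ - 1 by omega]

lemma apply_of_le (hθ : 2 ≤ θ) {i : ℕ} (hi : i ≤ θ - 2) :
    tailSetting θ b c i = (1 - b - c) / ((θ : ℝ) - 2) := by
  simp [tailSetting, show i ≠ θ - 1 by omega, show i ≠ θ by omega]

lemma sum_Icc (hθ : 3 ≤ θ) : ∑ i ∈ Icc 1 θ, tailSetting θ b c i = 1 := by
  obtain ⟨n, rfl⟩ : ∃ n, θ = n + 2 := ⟨θ - 2, by omega⟩
  have hn : (n : ℝ) ≠ 0 := by norm_cast; omega
  have hcast : ((n + 2 : ℕ) : ℝ) - 2 = n := by push_cast; ring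
  have hb : tailSetting (n + 2) b c (n + 1) = b := apply_sub_one
  have hc : tailSetting (n + 2) b c (n + 2) = c := apply_self (by omega)
  rw [sum_Icc_succ_top (by omega), sum_Icc_succ_top (by omega), hb, hc,
    sum_congr rfl fun i hi => apply_of_le (by omega) (by simp at hi; omega)]
  rw [sum_const, Nat.card_Icc, nsmul_eq_mul, hcast, Nat.add_sub_cancel]
  field_simp
  ring

variable (hθ : 3 ≤ θ) (hc : 0 < c) (hcb : c < b) (hbc : (b + c) * ((θ : ℝ) - 1) < 1)
include hθ hc hcb hbc

lemma lt_apply_of_le {i : ℕ} (hi : i ≤ θ - 2) :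
    tailSetting θ b c (θ - 1) < tailSetting θ b c i ∧
      tailSetting θ b c θ < tailSetting θ b c i := by
  rw [apply_sub_one, apply_self (by omega)]
  have hθ2 := cast_sub_two_pos hθ
  rw [apply_of_le (by omega) hi, lt_div_iff₀ hθ2, lt_div_iff₀ hθ2]
  constructor <;> nlinarith

lemma pos {i : ℕ} (hi : i ∈ Icc 1 θ) : 0 < tailSetting θ b c i := by
  rw [mem_Icc] at hi
  obtain rfl | rfl | hi' : i = θ - 1 ∨ i = θ ∨ i ≤ θ - 2 := by omega
  · simpa using hc.trans hcb
  · simpa [apply_self (show 1 ≤ i by omega)] using hc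
  · have hlt := (lt_apply_of_le hθ hc hcb hbc hi').2
    rw [apply_self (by omega)] at hlt
    exact hc.trans hlt

end tailSetting

theorem stmt7_general (θ : ℕ) (hθ : 3 ≤ θ) (v₁ v₂ v₃ : ℝ)
    (h32 : v₃ < v₂) (h21 : v₂ < v₁)
    (hgap : (v₁ - v₂) / (v₂ - v₃) < 1 / ((θ : ℝ) - 2))
    (Y : ℕ → ℝ)
    (hpos : ∀ i ∈ Finset.Icc 1 θ, 0 < Y i) :
    ∃ Y' : ℕ → ℝ,
      (∀ i ∈ Finset.Icc 1 θ, 0 < Y' i) ∧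
      (∑ i ∈ Finset.Icc 1 θ, Y' i = 1) ∧
      (∀ i, 1 ≤ i → i ≤ θ - 2 → Y' (θ - 1) < Y' i ∧ Y' θ < Y' i) ∧
      Y' θ < Y' (θ - 1) ∧
      (v₁ - v₂) / (v₂ - v₃) < (Y' (θ - 1) - Y' θ) / (1 - Y' (θ - 1) - Y' θ) ∧
      (1 - Y' (θ - 1) - Y' θ) * v₁ + (Y' (θ - 1) + Y' θ) * v₃ >
        (1 - Y (θ - 1) - Y θ) * v₂ + (Y (θ - 1) + Y θ) * v₃ := by
  set S := Y (θ - 1) + Y θ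
  set q := (v₁ - v₂) / (v₁ - v₃)
  have hθ2 := cast_sub_two_pos hθ
  have hS : 0 < S := add_pos (hpos _ (by simp; omega)) (hpos _ (by simp; omega))
  have hq : q < 1 / ((θ : ℝ) - 1) := by
    have := div_sub_lt_one_div_add_one h32 h21 hθ2 hgap
    rwa [show (θ : ℝ) - 2 + 1 = θ - 1 by ring] at this
  obtain ⟨T, hqT, hTS, hTθ⟩ :=
    exists_tail_mass ((div_lt_one (by linarith)).2 (by linarith)) hS hq
  rw [lt_div_iff₀ (by linarith)] at hTθ
  obtain ⟨b, c, hc, hcb, rfl, hrisk⟩ := exists_split_of_mul_one_sub_lt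
    (div_nonneg (by linarith) (by linarith)) (by nlinarith) (div_sub_mul_one_sub_lt h32 h21 hqT)
  refine ⟨tailSetting θ b c, fun i => tailSetting.pos hθ hc hcb hTθ, tailSetting.sum_Icc hθ,
    fun i _ hi => tailSetting.lt_apply_of_le hθ hc hcb hTθ hi, ?_, ?_, ?_⟩
  all_goals simp only [tailSetting.apply_sub_one, tailSetting.apply_self (show 1 ≤ θ by omega)]
  · exact hcb
  · rw [lt_div_iff₀ (by nlinarith), sub_sub]
    exact hrisk
  · simp only [sub_sub]
    exact revenue_lt_of_sub_lt (by linarith) (by linarith)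

/-- Lemma 3, case (ii): from a truthful-equilibrium setting Y
with small tail mass one can construct a risky-equilibrium setting Y' with
strictly better revenue. -/
theorem stmt7 (θ : ℕ) (hθ : 3 ≤ θ) (v₁ v₂ v₃ : ℝ)
    (h3 : 0 ≤ v₃) (h32 : v₃ < v₂) (h21 : v₂ < v₁)
    (hgap : (v₁ - v₂) / (v₂ - v₃) < 1 / ((θ : ℝ) - 2))
    (Y : ℕ → ℝ)
    (hpos : ∀ i ∈ Finset.Icc 1 θ, 0 < Y i)
    (hsum : ∑ i ∈ Finset.Icc 1 θ, Y i = 1)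
    (hsmall : ∀ i, 1 ≤ i → i ≤ θ - 2 → Y (θ - 1) < Y i ∧ Y θ < Y i)
    (hsmalltail : (v₁ - v₂) / (v₂ - v₃) > (Y (θ - 1) + Y θ) / (1 - Y (θ - 1) - Y θ)) :
    ∃ Y' : ℕ → ℝ,
      (∀ i ∈ Finset.Icc 1 θ, 0 < Y' i) ∧
      (∑ i ∈ Finset.Icc 1 θ, Y' i = 1) ∧
      (∀ i, 1 ≤ i → i ≤ θ - 2 → Y' (θ - 1) < Y' i ∧ Y' θ < Y' i) ∧
      Y' θ < Y' (θ - 1) ∧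
      (v₁ - v₂) / (v₂ - v₃) < (Y' (θ - 1) - Y' θ) / (1 - Y' (θ - 1) - Y' θ) ∧
      (1 - Y' (θ - 1) - Y' θ) * v₁ + (Y' (θ - 1) + Y' θ) * v₃ >
        (1 - Y (θ - 1) - Y θ) * v₂ + (Y (θ - 1) + Y θ) * v₃ :=
  stmt7_general θ hθ v₁ v₂ v₃ h32 h21 hgap Y hpos
end

section
/- Consider the two-round auction mode N_{1,1} with θ ≥ 3, valuations v₁ > v₂ > v₃ > 0, and positive probabilities Y₁,…,Y_θ summing to 1 with Y_i > Y_{θ-1} > Y_θ (i ≤ θ−2). If (v₁−v₂)/(v₂−v₃) > (Y_{θ-1}−Y_θ)/(∑_{i=1}^{θ-2}Y_i), then truthful bidding Rank[1,2,3,…,θ] is a Nash equilibrium: the v₂-bidder prefers rank 2 to rank 1, i.e., Y_θ(v₂−v₃) > (∑_{i=1}^{θ-2}Y_i)(v₂−v₁) + Y_{θ-1}(v₂−v₃), and the v₁-bidder prefers rank 1 to rank 2, i.e., (∑_{i=1}^{θ-2}Y_i)(v₁−v₂) + Y_{θ-1}(v₁−v₃) > Y_θ(v₁−v₃). -/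
open Finset

lemma sum_Icc_one_pos_of_le {M : Type*} [AddCommMonoid M] [PartialOrder M]
    [IsOrderedCancelAddMonoid M] {f : ℕ → M} {m n : ℕ} (hf : ∀ i ∈ Icc 1 n, 0 < f i)
    (hm : 1 ≤ m) (hmn : m ≤ n) : 0 < ∑ i ∈ Icc 1 m, f i :=
  sum_pos (fun i hi => hf i (Icc_subset_Icc_right hmn hi)) ⟨1, mem_Icc.2 ⟨le_rfl, hm⟩⟩

section Utilities

variable {S y y' v₁ v₂ v₃ : ℝ}

/-- Here `S = ∑_{i ≤ θ-2} Y_i`, `y' = Y_{θ-1}`, `y = Y_θ`: the threshold condition on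
`(v₁ - v₂) / (v₂ - v₃)` is exactly the `v₂`-bidder's preference for rank 2 over rank 1. -/
lemma rank_two_preferred_iff (hS : 0 < S) (h32 : v₃ < v₂) :
    S * (v₂ - v₁) + y' * (v₂ - v₃) < y * (v₂ - v₃) ↔ (y' - y) / S < (v₁ - v₂) / (v₂ - v₃) := by
  rw [div_lt_div_iff₀ hS (sub_pos.2 h32)]
  constructor <;> intro h <;> linarith

lemma rank_one_preferred (hS : 0 < S) (hy : y ≤ y') (h21 : v₂ < v₁) (h31 : v₃ < v₁) :
    y * (v₁ - v₃) < S * (v₁ - v₂) + y' * (v₁ - v₃) := by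
  have hgap : 0 < S * (v₁ - v₂) := mul_pos hS (sub_pos.2 h21)
  have hmono : y * (v₁ - v₃) ≤ y' * (v₁ - v₃) := mul_le_mul_of_nonneg_right hy (sub_pos.2 h31).le
  linarith

end Utilities

theorem stmt15_general (θ : ℕ) (hθ : 3 ≤ θ) (v₁ v₂ v₃ : ℝ)
    (h32 : v₃ < v₂) (h21 : v₂ < v₁)
    (Y : ℕ → ℝ)
    (hpos : ∀ i ∈ Finset.Icc 1 θ, 0 < Y i)
    (horder : Y θ < Y (θ - 1))
    (htruth : (v₁ - v₂) / (v₂ - v₃) >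
      (Y (θ - 1) - Y θ) / (∑ i ∈ Finset.Icc 1 (θ - 2), Y i)) :
    Y θ * (v₂ - v₃) >
        (∑ i ∈ Finset.Icc 1 (θ - 2), Y i) * (v₂ - v₁) + Y (θ - 1) * (v₂ - v₃) ∧
      (∑ i ∈ Finset.Icc 1 (θ - 2), Y i) * (v₁ - v₂) + Y (θ - 1) * (v₁ - v₃) >
        Y θ * (v₁ - v₃) := by
  have hS : 0 < ∑ i ∈ Icc 1 (θ - 2), Y i :=
    sum_Icc_one_pos_of_le hpos (by omega) (Nat.sub_le θ 2)
  exact ⟨(rank_two_preferred_iff hS h32).2 htruth,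
    rank_one_preferred hS horder.le h21 (h32.trans h21)⟩

/-- in mode N_{1,1}, if (v₁−v₂)/(v₂−v₃) exceeds the threshold
ratio then truthful bidding Rank[1,2,3,…,θ] is a Nash equilibrium. -/
theorem stmt15 (θ : ℕ) (hθ : 3 ≤ θ) (v₁ v₂ v₃ : ℝ)
    (h3 : 0 < v₃) (h32 : v₃ < v₂) (h21 : v₂ < v₁)
    (Y : ℕ → ℝ)
    (hpos : ∀ i ∈ Finset.Icc 1 θ, 0 < Y i)
    (hsum : ∑ i ∈ Finset.Icc 1 θ, Y i = 1)
    (hsmall : ∀ i, 1 ≤ i → i ≤ θ - 2 → Y (θ - 1) < Y i ∧ Y θ < Y i)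
    (horder : Y θ < Y (θ - 1))
    (htruth : (v₁ - v₂) / (v₂ - v₃) >
      (Y (θ - 1) - Y θ) / (∑ i ∈ Finset.Icc 1 (θ - 2), Y i)) :
    Y θ * (v₂ - v₃) >
        (∑ i ∈ Finset.Icc 1 (θ - 2), Y i) * (v₂ - v₁) + Y (θ - 1) * (v₂ - v₃) ∧
      (∑ i ∈ Finset.Icc 1 (θ - 2), Y i) * (v₁ - v₂) + Y (θ - 1) * (v₁ - v₃) >
        Y θ * (v₁ - v₃) :=
  stmt15_general θ hθ v₁ v₂ v₃ h32 h21 Y hpos horder htruth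
end
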